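/- Let X and Y be Banach spaces, let ε ∈ [0,1), and let T ∈ L(X, Y) be an absolutely strongly exposing operator with M_T = { μ x₀ : |μ| = 1 } for some x₀ ∈ S_X. Then for any A ∈ L(X, Y) with ‖A‖ = 1, the following are equivalent: (i) T ⊥_B^ε A; (ii) there exists y* ∈ Y* with ‖y*‖ = 1, y*(T x₀) = ‖T‖, and |y*(A x₀)| ≤ ε. Moreover, if M_T ⊆ M_A, then T ⊥_B^ε A if and only if T x₀ ⊥_B^ε A x₀. -/

import Mathlib

/-!
If `T ⊥_B^ε A`, then for small `t > 0` any near-maximiser `x` of `T + t λ A` nearly norms `T`,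
and convexity of `s ↦ ‖(T + s λ A) x‖` gives `‖(T + λ A) x‖ ≥ ‖T‖ - ε ‖λ A‖ - t`. Absolute strong
exposure moves unimodular multiples of these `x` to `x₀`, so `‖T x₀ + λ A x₀‖ ≥ ‖T x₀‖ - ε |λ|`
for all `λ`; the converse is immediate since `‖x₀‖ = 1`. By Hahn–Banach, this vector inequality
holds exactly when a norm-one functional attains its norm at `T x₀` and is at most `ε` at `A x₀`.
-/

open Filter Topology Metric NormedSpace

def BirkhoffJamesOrthogonal (𝕜 : Type*) {E : Type*} [NormedField 𝕜] [NormedAddCommGroup E]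
    [NormedSpace 𝕜 E] (ε : ℝ) (u v : E) : Prop :=
  ∀ lam : 𝕜, ‖u‖ - ε * ‖lam • v‖ ≤ ‖u + lam • v‖

def ContinuousLinearMap.IsAbsStronglyExposingAt {𝕜 X Y : Type*} [NontriviallyNormedField 𝕜]
    [NormedAddCommGroup X] [NormedSpace 𝕜 X] [NormedAddCommGroup Y] [NormedSpace 𝕜 Y]
    (T : X →L[𝕜] Y) (x₀ : X) : Prop :=
  ∀ xs : ℕ → X, (∀ n, ‖xs n‖ ≤ 1) → Tendsto (fun n => ‖T (xs n)‖) atTop (𝓝 ‖T‖) →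
    ∃ θ : ℕ → 𝕜, (∀ n, ‖θ n‖ = 1) ∧ Tendsto (fun n => θ n • xs n) atTop (𝓝 x₀)

namespace ContinuousLinearMap.IsAbsStronglyExposingAt

variable {𝕜 X Y Z : Type*} [NontriviallyNormedField 𝕜]
  [NormedAddCommGroup X] [NormedSpace 𝕜 X] [NormedAddCommGroup Y] [NormedSpace 𝕜 Y]
  [NormedAddCommGroup Z] [NormedSpace 𝕜 Z] {T : X →L[𝕜] Y} {x₀ : X}

theorem tendsto_norm_apply (hT : T.IsAbsStronglyExposingAt x₀) {xs : ℕ → X}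
    (hxs : ∀ n, ‖xs n‖ ≤ 1) (hTxs : Tendsto (fun n => ‖T (xs n)‖) atTop (𝓝 ‖T‖))
    (B : X →L[𝕜] Z) : Tendsto (fun n => ‖B (xs n)‖) atTop (𝓝 ‖B x₀‖) := by
  obtain ⟨θ, hθ, hθxs⟩ := hT xs hxs hTxs
  simpa [norm_smul, hθ] using ((B.continuous.tendsto x₀).comp hθxs).norm

theorem eq_zero_of_opNorm_eq_zero (hT : T.IsAbsStronglyExposingAt x₀) (h : ‖T‖ = 0) :
    x₀ = 0 := by
  obtain ⟨θ, -, hθ⟩ := hT (fun _ => 0) (fun _ => by simp) (by simp [h])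
  simp only [smul_zero] at hθ
  exact (tendsto_const_nhds_iff.1 hθ).symm

end ContinuousLinearMap.IsAbsStronglyExposingAt

theorem WithLp.norm_toLp_one_prod {α β : Type*} [SeminormedAddCommGroup α]
    [SeminormedAddCommGroup β] (a : α) (b : β) : ‖WithLp.toLp 1 (a, b)‖ = ‖a‖ + ‖b‖ := by
  rw [WithLp.prod_norm_eq_add (by simp)]
  simp

section Dual

variable {𝕜 E : Type*} [RCLike 𝕜] [NormedAddCommGroup E] [NormedSpace 𝕜 E]

theorem exists_dual_eq_norm_of_opNorm_le_one {F : Type*} [NormedAddCommGroup F]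
    [NormedSpace 𝕜 F] (j : E →L[𝕜] F) (hj : ‖j‖ ≤ 1) {u : E} (hu : u ≠ 0)
    (hju : ‖j u‖ = ‖u‖) (v : E) :
    ∃ φ : StrongDual 𝕜 E, ‖φ‖ = 1 ∧ φ u = ‖u‖ ∧ ‖φ v‖ ≤ ‖j v‖ := by
  obtain ⟨ψ, hψ, hψu⟩ := exists_dual_vector 𝕜 (j u) (by rwa [hju, norm_ne_zero_iff])
  have hφu : ψ.comp j u = ‖u‖ := by rw [ContinuousLinearMap.comp_apply, hψu, hju]
  refine ⟨ψ.comp j, le_antisymm ?_ ?_, hφu, ?_⟩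
  · simpa [hψ] using ψ.opNorm_comp_le j |>.trans (by rw [hψ, one_mul]; exact hj)
  · have := (ψ.comp j).le_opNorm u
    rw [hφu, RCLike.norm_ofReal, abs_norm] at this
    exact one_le_of_le_mul_right₀ (norm_pos_iff.2 hu) (by linarith)
  · simpa [hψ] using ψ.le_opNorm (j v)

theorem exists_dual_of_forall_norm_sub_le_norm_add_smul {u : E} (hu : u ≠ 0) {c : ℝ}
    (hc : 0 ≤ c) (v : E) (h : ∀ lam : 𝕜, ‖u‖ - c * ‖lam‖ ≤ ‖u + lam • v‖) :
    ∃ φ : StrongDual 𝕜 E, ‖φ‖ = 1 ∧ φ u = ‖u‖ ∧ ‖φ v‖ ≤ c := by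
  -- `j y = [(y, 0)]` in `(E ⊕ₗ₁ 𝕜) / 𝕜 (v, c)`, whose norm is `inf_b (‖y + b v‖ + |b| c)`.
  let K : Submodule 𝕜 (WithLp 1 (E × 𝕜)) := 𝕜 ∙ WithLp.toLp 1 (v, (c : 𝕜))
  have : IsClosed (K : Set (WithLp 1 (E × 𝕜))) := K.closed_of_finiteDimensional
  let j : E →L[𝕜] WithLp 1 (E × 𝕜) ⧸ K := K.mkQL.comp
    ((WithLp.prodContinuousLinearEquiv 1 𝕜 E 𝕜).symm.toContinuousLinearMap.comp (.inl 𝕜 E 𝕜))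
  have hj : ∀ y, j y = K.mkQ (WithLp.toLp 1 (y, 0)) := fun _ => rfl
  have hj_le : ‖j‖ ≤ 1 := j.opNorm_le_bound zero_le_one fun y => by
    simpa [hj] using Submodule.Quotient.norm_mk_le K (WithLp.toLp 1 (y, (0 : 𝕜)))
  have hju : ‖j u‖ = ‖u‖ := by
    refine le_antisymm (by simpa using j.le_of_opNorm_le hj_le u)
      (QuotientAddGroup.le_norm_iff.2 fun m hm => ?_)
    obtain ⟨b, hb⟩ : ∃ b : 𝕜, b • WithLp.toLp 1 (v, (c : 𝕜)) = m - WithLp.toLp 1 (u, 0) :=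
      Submodule.mem_span_singleton.1 ((Submodule.Quotient.eq K).1 hm)
    have hm : m = WithLp.toLp 1 (u + b • v, b * c) := by
      rw [← sub_add_cancel m (WithLp.toLp 1 (u, 0)), ← hb, ← WithLp.toLp_smul,
        ← WithLp.toLp_add, Prod.smul_mk, Prod.mk_add_mk, add_zero, add_comm, smul_eq_mul]
    have := h b
    rw [hm, WithLp.norm_toLp_one_prod, norm_mul, RCLike.norm_ofReal, abs_of_nonneg hc]
    linarith
  have hjv : j v = K.mkQ (WithLp.toLp 1 (0, -(c : 𝕜))) := by
    rw [hj, Submodule.mkQ_apply, Submodule.mkQ_apply, Submodule.Quotient.eq, ← WithLp.toLp_sub,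
      Prod.mk_sub_mk, sub_zero, zero_sub, neg_neg]
    exact Submodule.mem_span_singleton_self _
  obtain ⟨φ, hφ, hφu, hφv⟩ := exists_dual_eq_norm_of_opNorm_le_one j hj_le hu hju v
  refine ⟨φ, hφ, hφu, hφv.trans ?_⟩
  simpa [hjv, WithLp.norm_toLp_one_prod, abs_of_nonneg hc] using
    Submodule.Quotient.norm_mk_le K (WithLp.toLp 1 ((0 : E), -(c : 𝕜)))

theorem forall_norm_sub_le_norm_add_smul_iff_exists_dual {u : E} (hu : u ≠ 0) {c : ℝ}
    (hc : 0 ≤ c) (v : E) :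
    (∀ lam : 𝕜, ‖u‖ - c * ‖lam‖ ≤ ‖u + lam • v‖) ↔
      ∃ φ : StrongDual 𝕜 E, ‖φ‖ = 1 ∧ φ u = ‖u‖ ∧ ‖φ v‖ ≤ c := by
  refine ⟨exists_dual_of_forall_norm_sub_le_norm_add_smul hu hc v, ?_⟩
  rintro ⟨φ, hφ, hφu, hφv⟩ lam
  calc ‖u‖ - c * ‖lam‖ ≤ ‖(‖u‖ : 𝕜)‖ - ‖lam * φ v‖ := by
        rw [norm_mul, RCLike.norm_ofReal, abs_norm]
        nlinarith [norm_nonneg lam]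
    _ ≤ ‖φ (u + lam • v)‖ := by
        rw [map_add, map_smul, hφu, smul_eq_mul]
        exact norm_sub_le_norm_add _ _
    _ ≤ ‖u + lam • v‖ := by simpa [hφ] using φ.le_opNorm (u + lam • v)

end Dual

section Operators

variable {𝕜 X Y : Type*} [RCLike 𝕜]
  [NormedAddCommGroup X] [NormedSpace 𝕜 X] [NormedAddCommGroup Y] [NormedSpace 𝕜 Y]

theorem norm_add_ofReal_smul_le {E : Type*} [NormedAddCommGroup E] [NormedSpace 𝕜 E]
    (u w : E) {t : ℝ} (ht₀ : 0 ≤ t) (ht₁ : t ≤ 1) :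
    ‖u + (t : 𝕜) • w‖ ≤ (1 - t) * ‖u‖ + t * ‖u + w‖ := by
  have : u + (t : 𝕜) • w = ((1 - t : ℝ) : 𝕜) • u + (t : 𝕜) • (u + w) := by
    push_cast; rw [smul_add, sub_smul, one_smul]; abel
  rw [this]
  refine (norm_add_le _ _).trans_eq ?_
  rw [norm_smul, norm_smul, RCLike.norm_ofReal, RCLike.norm_ofReal, abs_of_nonneg ht₀,
    abs_of_nonneg (sub_nonneg.2 ht₁)]

namespace BirkhoffJamesOrthogonal

variable {ε : ℝ} {T A : X →L[𝕜] Y}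

theorem exists_near_norming (h : BirkhoffJamesOrthogonal 𝕜 ε T A) (lam : 𝕜) {t : ℝ}
    (ht₀ : 0 < t) (ht₁ : t ≤ 1) :
    ∃ x : X, ‖x‖ ≤ 1 ∧ ‖T‖ - t * ((ε + 1) * ‖lam • A‖ + 1) ≤ ‖T x‖ ∧
      ‖T‖ - ε * ‖lam • A‖ - t ≤ ‖(T + lam • A) x‖ := by
  set S := T + (t : 𝕜) • lam • A
  have hS : ‖T‖ - ε * (t * ‖lam • A‖) ≤ ‖S‖ := by
    have := h ((t : 𝕜) * lam)
    rwa [mul_smul, norm_smul, RCLike.norm_ofReal, abs_of_pos ht₀] at this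
  obtain ⟨x, hx, hSx⟩ := S.exists_lt_apply_of_lt_opNorm (sub_lt_self ‖S‖ (pow_pos ht₀ 2))
  have hSx_eq : S x = T x + (t : 𝕜) • (lam • A) x := by simp [S]
  have hAx : ‖(lam • A) x‖ ≤ ‖lam • A‖ := (lam • A).unit_le_opNorm x hx.le
  have hTx : ‖T x‖ ≤ ‖T‖ := T.unit_le_opNorm x hx.le
  refine ⟨x, hx.le, ?_, ?_⟩
  · have : ‖S x‖ ≤ ‖T x‖ + t * ‖lam • A‖ := by
      rw [hSx_eq]
      refine (norm_add_le _ _).trans ?_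
      rw [norm_smul, RCLike.norm_ofReal, abs_of_pos ht₀]
      gcongr
    nlinarith
  · have hconv : ‖S x‖ ≤ (1 - t) * ‖T x‖ + t * ‖(T + lam • A) x‖ := by
      simpa [hSx_eq] using norm_add_ofReal_smul_le (𝕜 := 𝕜) (T x) ((lam • A) x) ht₀.le ht₁
    have : t * (‖T‖ - ε * ‖lam • A‖ - t) ≤ t * ‖(T + lam • A) x‖ := by nlinarith
    exact le_of_mul_le_mul_left this ht₀

theorem le_norm_apply (h : BirkhoffJamesOrthogonal 𝕜 ε T A) {x₀ : X}
    (hT : T.IsAbsStronglyExposingAt x₀) (lam : 𝕜) :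
    ‖T‖ - ε * ‖lam • A‖ ≤ ‖T x₀ + lam • A x₀‖ := by
  have ht : Tendsto (fun n : ℕ => 1 / ((n : ℝ) + 1)) atTop (𝓝 0) :=
    tendsto_one_div_add_atTop_nhds_zero_nat
  choose xs hxs hTxs hBxs using fun n : ℕ =>
    h.exists_near_norming lam (t := 1 / (n + 1)) Nat.one_div_pos_of_nat
      (div_le_one_of_le₀ (by simp) (by positivity))
  have hTlim : Tendsto (fun n => ‖T (xs n)‖) atTop (𝓝 ‖T‖) := by
    refine tendsto_of_tendsto_of_tendsto_of_le_of_le ?_ tendsto_const_nhds hTxs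
      fun n => T.unit_le_opNorm _ (hxs n)
    simpa using tendsto_const_nhds.sub (ht.mul_const ((ε + 1) * ‖lam • A‖ + 1))
  have hlim := hT.tendsto_norm_apply hxs hTlim (T + lam • A)
  rw [add_apply, smul_apply] at hlim
  exact le_of_tendsto_of_tendsto (by simpa using tendsto_const_nhds.sub ht) hlim
    (Eventually.of_forall hBxs)

theorem of_le_norm_apply {x₀ : X} (hx₀ : ‖x₀‖ ≤ 1)
    (h : ∀ lam : 𝕜, ‖T‖ - ε * ‖lam • A‖ ≤ ‖T x₀ + lam • A x₀‖) :
    BirkhoffJamesOrthogonal 𝕜 ε T A := fun lam =>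
  (h lam).trans <| by simpa using (T + lam • A).unit_le_opNorm x₀ hx₀

end BirkhoffJamesOrthogonal

theorem ContinuousLinearMap.IsAbsStronglyExposingAt.birkhoffJamesOrthogonal_iff {ε : ℝ}
    {T A : X →L[𝕜] Y} {x₀ : X} (hT : T.IsAbsStronglyExposingAt x₀) (hx₀ : ‖x₀‖ ≤ 1) :
    BirkhoffJamesOrthogonal 𝕜 ε T A ↔
      ∀ lam : 𝕜, ‖T‖ - ε * ‖lam • A‖ ≤ ‖T x₀ + lam • A x₀‖ :=
  ⟨fun h => h.le_norm_apply hT, BirkhoffJamesOrthogonal.of_le_norm_apply hx₀⟩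

end Operators

theorem approx_BJ_orthogonality_of_ASE_operator_general
    {𝕜 X Y : Type*} [RCLike 𝕜]
    [NormedAddCommGroup X] [NormedSpace 𝕜 X]
    [NormedAddCommGroup Y] [NormedSpace 𝕜 Y]
    (ε : ℝ) (hε0 : 0 ≤ ε)
    (T : X →L[𝕜] Y) (x₀ : X) (hx₀ : ‖x₀‖ = 1)
    (hASE : ∀ xs : ℕ → X, (∀ n, ‖xs n‖ ≤ 1) →
      Tendsto (fun n => ‖T (xs n)‖) atTop (𝓝 ‖T‖) →
      ∃ θ : ℕ → 𝕜, (∀ n, ‖θ n‖ = 1) ∧ Tendsto (fun n => θ n • xs n) atTop (𝓝 x₀))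
    (hMT : {x : X | ‖x‖ = 1 ∧ ‖T x‖ = ‖T‖} = {x : X | ∃ μ : 𝕜, ‖μ‖ = 1 ∧ x = μ • x₀})
    (A : X →L[𝕜] Y) (hA : ‖A‖ = 1) :
    ((∀ lam : 𝕜, ‖T‖ - ε * ‖lam • A‖ ≤ ‖T + lam • A‖) ↔
      ∃ φ : StrongDual 𝕜 Y, ‖φ‖ = 1 ∧ φ (T x₀) = (‖T‖ : 𝕜) ∧ ‖φ (A x₀)‖ ≤ ε) ∧
    ({x : X | ‖x‖ = 1 ∧ ‖T x‖ = ‖T‖} ⊆ {x : X | ‖x‖ = 1 ∧ ‖A x‖ = ‖A‖} →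
      ((∀ lam : 𝕜, ‖T‖ - ε * ‖lam • A‖ ≤ ‖T + lam • A‖) ↔
        ∀ lam : 𝕜, ‖T x₀‖ - ε * ‖lam • A x₀‖ ≤ ‖T x₀ + lam • A x₀‖)) := by
  have hT : T.IsAbsStronglyExposingAt x₀ := hASE
  have hx₀M : x₀ ∈ {x : X | ‖x‖ = 1 ∧ ‖T x‖ = ‖T‖} := hMT ▸ ⟨1, norm_one, (one_smul 𝕜 x₀).symm⟩
  have hTx₀ : T x₀ ≠ 0 := fun h0 => by
    simp [hT.eq_zero_of_opNorm_eq_zero (by rw [← hx₀M.2, h0, norm_zero])] at hx₀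
  have horth : BirkhoffJamesOrthogonal 𝕜 ε T A ↔
      ∀ lam : 𝕜, ‖T x₀‖ - ε * ‖lam‖ ≤ ‖T x₀ + lam • A x₀‖ := by
    simp only [hT.birkhoffJamesOrthogonal_iff hx₀.le, norm_smul, hA, mul_one, hx₀M.2]
  refine ⟨horth.trans ?_, fun hsub => horth.trans ?_⟩
  · rw [forall_norm_sub_le_norm_add_smul_iff_exists_dual hTx₀ hε0, hx₀M.2]
  · have hAx₀ : ‖A x₀‖ = 1 := (hsub hx₀M).2.trans hA
    simp only [norm_smul, hAx₀, mul_one]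

/-- Let `T ∈ L(X, Y)` be an absolutely strongly exposing operator with
`M_T = {μ • x₀ : |μ| = 1}`, `ε ∈ [0,1)` and `‖A‖ = 1`. Then `T ⊥_B^ε A` iff some norm-one
functional `y*` with `y*(T x₀) = ‖T‖` satisfies `|y*(A x₀)| ≤ ε`; moreover if `M_T ⊆ M_A`,
then `T ⊥_B^ε A` iff `T x₀ ⊥_B^ε A x₀`. -/
theorem approx_BJ_orthogonality_of_ASE_operator
    {𝕜 X Y : Type*} [RCLike 𝕜]
    [NormedAddCommGroup X] [NormedSpace 𝕜 X] [CompleteSpace X]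
    [NormedAddCommGroup Y] [NormedSpace 𝕜 Y] [CompleteSpace Y]
    (ε : ℝ) (hε0 : 0 ≤ ε) (hε1 : ε < 1)
    (T : X →L[𝕜] Y) (x₀ : X) (hx₀ : ‖x₀‖ = 1)
    (hASE : ∀ xs : ℕ → X, (∀ n, ‖xs n‖ ≤ 1) →
      Tendsto (fun n => ‖T (xs n)‖) atTop (𝓝 ‖T‖) →
      ∃ θ : ℕ → 𝕜, (∀ n, ‖θ n‖ = 1) ∧ Tendsto (fun n => θ n • xs n) atTop (𝓝 x₀))
    (hMT : {x : X | ‖x‖ = 1 ∧ ‖T x‖ = ‖T‖} = {x : X | ∃ μ : 𝕜, ‖μ‖ = 1 ∧ x = μ • x₀})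
    (A : X →L[𝕜] Y) (hA : ‖A‖ = 1) :
    ((∀ lam : 𝕜, ‖T‖ - ε * ‖lam • A‖ ≤ ‖T + lam • A‖) ↔
      ∃ φ : StrongDual 𝕜 Y, ‖φ‖ = 1 ∧ φ (T x₀) = (‖T‖ : 𝕜) ∧ ‖φ (A x₀)‖ ≤ ε) ∧
    ({x : X | ‖x‖ = 1 ∧ ‖T x‖ = ‖T‖} ⊆ {x : X | ‖x‖ = 1 ∧ ‖A x‖ = ‖A‖} →
      ((∀ lam : 𝕜, ‖T‖ - ε * ‖lam • A‖ ≤ ‖T + lam • A‖) ↔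
        ∀ lam : 𝕜, ‖T x₀‖ - ε * ‖lam • A x₀‖ ≤ ‖T x₀ + lam • A x₀‖)) :=
  approx_BJ_orthogonality_of_ASE_operator_general ε hε0 T x₀ hx₀ hASE hMT A hA
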